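/- arXiv:1711.04888 — 3 statements merged into one kernel-verified Lean document; each statement's English description precedes it below -/
import Mathlib

section
/- Let Ω be a bounded domain with periodic boundary conditions, V ∈ L^∞(Ω) nonnegative, and let u solve -Δu + Vu = 1 (the landscape function). If ψ is an eigenfunction of H = -Δ + V with eigenvalue λ, then for almost every x ∈ Ω, |ψ(x)| ≤ λ u(x) ‖ψ‖_{L^∞}. -/
/-!
At a minimum point of a `C²` function every second directional derivative, hence the Laplacian,
is nonnegative. On the torus every continuous function attains its minimum, so if
`Hw = -Δw + Vw > 0` with `V ≥ 0` then `w > 0` at its minimum point and therefore everywhere;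
adding `εu` and letting `ε → 0` gives `w ≥ 0` whenever `Hw ≥ 0`. Applied to `K u ± ψ`, where
`|Hψ| ≤ K`, this yields `|ψ| ≤ K u`. For an eigenfunction, `|Hψ| = |λψ| ≤ λ ‖ψ‖_∞` as soon as
`λ ≥ 0`, and this sign is read off from `Hψ` at a maximum point of `|ψ|`.
-/

open MeasureTheory

noncomputable section

/-- The `i`-th coordinate unit vector in `ℝⁿ`. -/
def eVec (n : ℕ) (i : Fin n) : EuclideanSpace ℝ (Fin n) := EuclideanSpace.single i 1

/-- Periodicity with respect to the unit lattice `ℤⁿ` (torus boundary conditions). -/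
def per {n : ℕ} (f : EuclideanSpace ℝ (Fin n) → ℝ) : Prop :=
  ∀ (x : EuclideanSpace ℝ (Fin n)) (i : Fin n), f (x + eVec n i) = f x

/-- A fundamental domain `Q = [0,1)ⁿ` of the torus. -/
def Qd (n : ℕ) : Set (EuclideanSpace ℝ (Fin n)) :=
  {x | ∀ i, x i ∈ Set.Ico (0:ℝ) 1}

/-- The Laplacian `Δf = ∑ᵢ ∂²f/∂xᵢ²`. -/
def lap {n : ℕ} (f : EuclideanSpace ℝ (Fin n) → ℝ) (x : EuclideanSpace ℝ (Fin n)) : ℝ :=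
  ∑ i, fderiv ℝ (fun y => fderiv ℝ f y (eVec n i)) x (eVec n i)

open Filter Topology

theorem neg_abs_le_mul_of_abs_eq_one {c : ℝ} (hc : |c| = 1) (t : ℝ) : -|t| ≤ c * t := by
  simpa [abs_mul, hc] using neg_abs_le (c * t)

section Calculus

variable {E : Type*} [NormedAddCommGroup E] [NormedSpace ℝ E]

def periodSubgroup (f : E → ℝ) : AddSubgroup E where
  carrier := {v | ∀ x, f (x + v) = f x}
  add_mem' {v w} hv hw x := by rw [← add_assoc, hw, hv]
  zero_mem' x := by rw [add_zero]
  neg_mem' {v} hv x := by rw [← hv (x + -v), neg_add_cancel_right]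

/-- The minimum is attained on the closure of the fundamental domain, which is compact. -/
theorem exists_forall_le_of_basis_periodic {ι : Type*} [Fintype ι] (b : Module.Basis ι ℝ E)
    {f : E → ℝ} (hf : Continuous f) (hper : ∀ i x, f (x + b i) = f x) :
    ∃ x₀, ∀ x, f x₀ ≤ f x := by
  have : FiniteDimensional ℝ E := b.finiteDimensional_of_finite
  have hlattice : Submodule.span ℤ (Set.range b) ≤ (periodSubgroup f).toIntSubmodule :=
    Submodule.span_le.2 (Set.range_subset_iff.2 hper)
  have hfract (x : E) : f (ZSpan.fract b x) = f x := by
    rw [ZSpan.fract_apply, sub_eq_add_neg]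
    exact hlattice (neg_mem (ZSpan.floor b x).2) x
  obtain ⟨x₀, -, hmin⟩ := (ZSpan.fundamentalDomain_isBounded b).isCompact_closure.exists_isMinOn
    ⟨_, subset_closure (ZSpan.fract_mem_fundamentalDomain b 0)⟩ hf.continuousOn
  exact ⟨x₀, fun x => hfract x ▸ hmin (subset_closure (ZSpan.fract_mem_fundamentalDomain b x))⟩

/-- If `g'' t < 0`, then `t` is also a local maximum of `g`, so `g` is locally constant there. -/
theorem IsLocalMin.deriv_deriv_nonneg {g : ℝ → ℝ} {t : ℝ} (hmin : IsLocalMin g t)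
    (hc : ContinuousAt g t) : 0 ≤ deriv (deriv g) t := by
  by_contra! hneg
  have hconst : g =ᶠ[𝓝 t] fun _ => g t :=
    (hmin.and (isLocalMax_of_deriv_deriv_neg hneg hmin.deriv_eq_zero hc)).mono
      fun s hs => le_antisymm hs.2 hs.1
  have hzero : deriv (deriv g) t = 0 := by
    rw [hconst.deriv.deriv_eq]
    simp
  exact hneg.ne hzero

theorem deriv_comp_add_smul {F : E → ℝ} {x v : E} {t : ℝ}
    (hF : DifferentiableAt ℝ F (x + t • v)) :
    deriv (fun s : ℝ => F (x + s • v)) t = fderiv ℝ F (x + t • v) v := by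
  have hline : HasDerivAt (fun s : ℝ => x + s • v) v t := by
    simpa using ((hasDerivAt_id t).smul_const v).const_add x
  exact (hF.hasFDerivAt.comp_hasDerivAt t hline).deriv

theorem ContDiff.differentiable_fderiv_apply {f : E → ℝ} (hf : ContDiff ℝ 2 f) (v : E) :
    Differentiable ℝ (fun y => fderiv ℝ f y v) :=
  ((hf.fderiv_right le_rfl).clm_apply contDiff_const).differentiable one_ne_zero

theorem IsLocalMin.fderiv_fderiv_apply_nonneg {f : E → ℝ} {x : E} (hmin : IsLocalMin f x)
    (hf : ContDiff ℝ 2 f) (v : E) : 0 ≤ fderiv ℝ (fun y => fderiv ℝ f y v) x v := by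
  have hline : Continuous (fun s : ℝ => x + s • v) := by fun_prop
  have hgmin : IsLocalMin (fun s : ℝ => f (x + s • v)) 0 :=
    IsLocalMin.comp_continuous (by simpa using hmin) hline.continuousAt
  have hderiv : deriv (fun s : ℝ => f (x + s • v)) = fun s => fderiv ℝ f (x + s • v) v :=
    funext fun s => deriv_comp_add_smul (hf.differentiable two_ne_zero _)
  simpa [hderiv, deriv_comp_add_smul (hf.differentiable_fderiv_apply v _)] using
    hgmin.deriv_deriv_nonneg (hf.continuous.comp hline).continuousAt

end Calculus

variable {n : ℕ}

local notation "𝔼" n:max => EuclideanSpace ℝ (Fin n)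

theorem per.exists_forall_le {f : 𝔼 n → ℝ} (hper : per f) (hf : Continuous f) :
    ∃ x₀, ∀ x, f x₀ ≤ f x :=
  exists_forall_le_of_basis_periodic (EuclideanSpace.basisFun (Fin n) ℝ).toBasis hf
    fun i x => by simpa [eVec] using hper x i

theorem lap_nonneg_of_isLocalMin {f : 𝔼 n → ℝ} {x : 𝔼 n} (hmin : IsLocalMin f x)
    (hf : ContDiff ℝ 2 f) : 0 ≤ lap f x :=
  Finset.sum_nonneg fun i _ => hmin.fderiv_fderiv_apply_nonneg hf (eVec n i)

theorem lap_add {f g : 𝔼 n → ℝ} (hf : ContDiff ℝ 2 f) (hg : ContDiff ℝ 2 g) (x : 𝔼 n) :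
    lap (fun z => f z + g z) x = lap f x + lap g x := by
  simp only [lap, ← Finset.sum_add_distrib]
  refine Finset.sum_congr rfl fun i _ => ?_
  have hfirst : (fun y => fderiv ℝ (fun z => f z + g z) y (eVec n i))
      = fun y => fderiv ℝ f y (eVec n i) + fderiv ℝ g y (eVec n i) := funext fun y => by
    rw [fderiv_fun_add (hf.differentiable two_ne_zero y) (hg.differentiable two_ne_zero y)]
    rfl
  rw [hfirst, fderiv_fun_add (hf.differentiable_fderiv_apply _ x)
    (hg.differentiable_fderiv_apply _ x)]
  rfl

theorem lap_const_mul {f : 𝔼 n → ℝ} (hf : ContDiff ℝ 2 f) (c : ℝ) (x : 𝔼 n) :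
    lap (fun z => c * f z) x = c * lap f x := by
  simp only [lap, Finset.mul_sum]
  refine Finset.sum_congr rfl fun i _ => ?_
  have hfirst : (fun y => fderiv ℝ (fun z => c * f z) y (eVec n i))
      = fun y => c * fderiv ℝ f y (eVec n i) := funext fun y => by
    rw [fderiv_const_mul (hf.differentiable two_ne_zero y)]
    rfl
  rw [hfirst, fderiv_const_mul (hf.differentiable_fderiv_apply _ x)]
  rfl

def schrodinger (V f : 𝔼 n → ℝ) (x : 𝔼 n) : ℝ := -lap f x + V x * f x

theorem schrodinger_add {V f g : 𝔼 n → ℝ} (hf : ContDiff ℝ 2 f) (hg : ContDiff ℝ 2 g) (x : 𝔼 n) :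
    schrodinger V (fun z => f z + g z) x = schrodinger V f x + schrodinger V g x := by
  rw [schrodinger, schrodinger, schrodinger, lap_add hf hg]
  ring

theorem schrodinger_const_mul {V f : 𝔼 n → ℝ} (hf : ContDiff ℝ 2 f) (c : ℝ) (x : 𝔼 n) :
    schrodinger V (fun z => c * f z) x = c * schrodinger V f x := by
  rw [schrodinger, schrodinger, lap_const_mul hf]
  ring

variable {V : 𝔼 n → ℝ}

theorem pos_of_schrodinger_pos (hV : ∀ x, 0 ≤ V x) {w : 𝔼 n → ℝ} (hw2 : ContDiff ℝ 2 w)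
    (hwper : per w) (hHw : ∀ x, 0 < schrodinger V w x) (x : 𝔼 n) : 0 < w x := by
  obtain ⟨x₀, hx₀⟩ := hwper.exists_forall_le hw2.continuous
  have hlap : 0 ≤ lap w x₀ := lap_nonneg_of_isLocalMin (Eventually.of_forall hx₀) hw2
  have hVw : 0 < V x₀ * w x₀ := by
    have := hHw x₀
    unfold schrodinger at this
    linarith
  exact (pos_of_mul_pos_right hVw (hV x₀)).trans_le (hx₀ x)

section Landscape

variable {u : 𝔼 n → ℝ} (hV : ∀ x, 0 ≤ V x) (hu2 : ContDiff ℝ 2 u) (huper : per u)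
  (hu : ∀ x, schrodinger V u x = 1)
include hV hu2 huper hu

theorem nonneg_of_schrodinger_nonneg {w : 𝔼 n → ℝ} (hw2 : ContDiff ℝ 2 w) (hwper : per w)
    (hHw : ∀ x, 0 ≤ schrodinger V w x) (x : 𝔼 n) : 0 ≤ w x := by
  have hpos (ε : ℝ) (hε : 0 < ε) : 0 < w x + ε * u x := by
    have hεu2 : ContDiff ℝ 2 (fun z => ε * u z) := contDiff_const.mul hu2
    refine pos_of_schrodinger_pos hV (w := fun z => w z + ε * u z) (hw2.add hεu2)
      (fun y i => by simp only [hwper y i, huper y i]) (fun y => ?_) x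
    rw [schrodinger_add hw2 hεu2, schrodinger_const_mul hu2, hu, mul_one]
    linarith [hHw y]
  have hlim : Tendsto (fun ε : ℝ => w x + ε * u x) (𝓝[>] 0) (𝓝 (w x)) :=
    ((by fun_prop : Continuous fun ε : ℝ => w x + ε * u x).tendsto' 0 (w x) (by simp)).mono_left
      nhdsWithin_le_nhds
  exact ge_of_tendsto hlim (eventually_nhdsWithin_of_forall fun ε hε => (hpos ε hε).le)

theorem abs_le_mul_landscape {ψ : 𝔼 n → ℝ} (hψ2 : ContDiff ℝ 2 ψ) (hψper : per ψ) {K : ℝ}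
    (hK : ∀ x, |schrodinger V ψ x| ≤ K) (x : 𝔼 n) : |ψ x| ≤ K * u x := by
  have hcomb (c : ℝ) (hc : |c| = 1) : 0 ≤ K * u x + c * ψ x := by
    have hKu2 : ContDiff ℝ 2 (fun z => K * u z) := contDiff_const.mul hu2
    have hcψ2 : ContDiff ℝ 2 (fun z => c * ψ z) := contDiff_const.mul hψ2
    refine nonneg_of_schrodinger_nonneg hV hu2 huper hu (w := fun z => K * u z + c * ψ z)
      (hKu2.add hcψ2) (fun y i => by simp only [hψper y i, huper y i]) (fun y => ?_) x
    rw [schrodinger_add hKu2 hcψ2, schrodinger_const_mul hu2, schrodinger_const_mul hψ2, hu,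
      mul_one]
    linarith [hK y, neg_abs_le_mul_of_abs_eq_one hc (schrodinger V ψ y)]
  rw [abs_le]
  constructor <;> linarith [hcomb 1 (by simp), hcomb (-1) (by simp)]

end Landscape

/-- At a maximum point `x₀` of `|ψ|`, the function `cψ` with `cψ(x₀) = -|ψ(x₀)|` is minimal, so
`λ · (-|ψ(x₀)|) = H(cψ)(x₀) ≤ V(x₀) · (-|ψ(x₀)|) ≤ 0`. -/
theorem eigenvalue_nonneg (hV : ∀ x, 0 ≤ V x) {ψ : 𝔼 n → ℝ} {lam : ℝ} (hψ2 : ContDiff ℝ 2 ψ)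
    (hψper : per ψ) (hψ : ∀ x, schrodinger V ψ x = lam * ψ x) {z : 𝔼 n} (hz : ψ z ≠ 0) :
    0 ≤ lam := by
  obtain ⟨x₀, hx₀⟩ := per.exists_forall_le (f := fun x => -|ψ x|)
    (fun x i => by simp only [hψper x i]) hψ2.continuous.abs.neg
  obtain ⟨c, hc, hcψ⟩ : ∃ c : ℝ, |c| = 1 ∧ c * ψ x₀ = -|ψ x₀| := by
    rcases abs_choice (ψ x₀) with h | h
    · exact ⟨-1, by simp, by rw [h]; ring⟩
    · exact ⟨1, by simp, by rw [h]; ring⟩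
  have hmin (x : 𝔼 n) : c * ψ x₀ ≤ c * ψ x := by
    linarith [hx₀ x, neg_abs_le_mul_of_abs_eq_one hc (ψ x)]
  have hcψ2 : ContDiff ℝ 2 (fun x => c * ψ x) := contDiff_const.mul hψ2
  have hlap := lap_nonneg_of_isLocalMin (Eventually.of_forall hmin) hcψ2
  have hH : schrodinger V (fun x => c * ψ x) x₀ = lam * (c * ψ x₀) := by
    rw [schrodinger_const_mul hψ2, hψ]
    ring
  have hmax_pos : 0 < |ψ x₀| := (abs_pos.2 hz).trans_le (by linarith [hx₀ z])
  unfold schrodinger at hH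
  rw [hcψ] at hH
  have hlam_mul : 0 ≤ lam * |ψ x₀| := by nlinarith [mul_nonneg (hV x₀) hmax_pos.le]
  exact nonneg_of_mul_nonneg_left hlam_mul hmax_pos

theorem landscape_inequality_general (n : ℕ)
    (V u ψ : EuclideanSpace ℝ (Fin n) → ℝ) (lam : ℝ)
    (hVnonneg : ∀ x, 0 ≤ V x)
    (hu2 : ContDiff ℝ 2 u) (huper : per u)
    (hu : ∀ x, -lap u x + V x * u x = 1)
    (hψ2 : ContDiff ℝ 2 ψ) (hψper : per ψ)
    (hψ : ∀ x, -lap ψ x + V x * ψ x = lam * ψ x)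
    (hψbdd : BddAbove (Set.range fun x => |ψ x|)) :
    ∀ᵐ x ∂(volume : Measure (EuclideanSpace ℝ (Fin n))),
      |ψ x| ≤ lam * u x * (⨆ y, |ψ y|) := by
  refine Eventually.of_forall fun x => ?_
  by_cases hψ0 : ∀ y, ψ y = 0
  · simp [hψ0]
  obtain ⟨z, hz⟩ := not_forall.1 hψ0
  have hlam : 0 ≤ lam := eigenvalue_nonneg hVnonneg hψ2 hψper hψ hz
  have hK (y : 𝔼 n) : |schrodinger V ψ y| ≤ lam * ⨆ y, |ψ y| := by
    rw [show schrodinger V ψ y = lam * ψ y from hψ y, abs_mul, abs_of_nonneg hlam]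
    exact mul_le_mul_of_nonneg_left (le_ciSup hψbdd y) hlam
  rw [mul_right_comm]
  exact abs_le_mul_landscape hVnonneg hu2 huper hu hψ2 hψper hK x

/-- the landscape inequality `|ψ| ≤ λ u ‖ψ‖_∞` a.e. -/
theorem landscape_inequality (n : ℕ)
    (V u ψ : EuclideanSpace ℝ (Fin n) → ℝ) (lam : ℝ)
    (hVmeas : Measurable V) (hVbdd : ∃ M, ∀ x, |V x| ≤ M)
    (hVnonneg : ∀ x, 0 ≤ V x) (hVper : per V)
    (hu2 : ContDiff ℝ 2 u) (huper : per u)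
    (hu : ∀ x, -lap u x + V x * u x = 1)
    (hψ2 : ContDiff ℝ 2 ψ) (hψper : per ψ)
    (hψ : ∀ x, -lap ψ x + V x * ψ x = lam * ψ x)
    (hψbdd : BddAbove (Set.range fun x => |ψ x|)) :
    ∀ᵐ x ∂(volume : Measure (EuclideanSpace ℝ (Fin n))),
      |ψ x| ≤ lam * u x * (⨆ y, |ψ y|) :=
  landscape_inequality_general n V u ψ lam hVnonneg hu2 huper hu hψ2 hψper hψ hψbdd
end
end

section
/- With u the landscape function, W = 1/u, and L as above, a function ψ ∈ H^1(Ω) satisfies (-Δ + V)ψ = λψ if and only if φ := ψ/u satisfies Lφ + Wφ = λφ. -/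
open MeasureTheory

noncomputable section

/-!
Writing `ψ = u φ`, the product rule gives `u² ∂ᵥφ = u ∂ᵥψ - ψ ∂ᵥu`; differentiating once more, the
first-order terms `∂ᵥu ∂ᵥψ` cancel, so `div (u² ∇φ) = u Δψ - ψ Δu`. The landscape equation
`Δu = V u - 1` then turns `Lφ + Wφ` into `((-Δ + V) ψ) / u`, and dividing by `u > 0` is reversible.
-/

section Conjugation

variable {E : Type*} [NormedAddCommGroup E] [NormedSpace ℝ E] {u ψ : E → ℝ}

lemma sq_mul_fderiv_div_apply {y : E} (hu : DifferentiableAt ℝ u y)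
    (hψ : DifferentiableAt ℝ ψ y) (hy : u y ≠ 0) (v : E) :
    u y ^ 2 * fderiv ℝ (fun z => ψ z / u z) y v
      = u y * fderiv ℝ ψ y v - ψ y * fderiv ℝ u y v := by
  have h := hψ.hasFDerivAt.mul ((hasDerivAt_inv hy).comp_hasFDerivAt y hu.hasFDerivAt)
  have hdiv : (fun z => ψ z / u z) = ψ * (fun t => t⁻¹) ∘ u := by
    funext z; exact div_eq_mul_inv _ _
  rw [hdiv, h.fderiv]
  simp only [add_apply, smul_apply, smul_eq_mul, Function.comp_apply]
  field_simp
  ring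

lemma fderiv_sq_mul_fderiv_div_apply (hu : ContDiff ℝ 2 u) (hψ : ContDiff ℝ 2 ψ) {x : E}
    (hx : u x ≠ 0) (v : E) :
    fderiv ℝ (fun y => u y ^ 2 * fderiv ℝ (fun z => ψ z / u z) y v) x v
      = u x * fderiv ℝ (fun y => fderiv ℝ ψ y v) x v
        - ψ x * fderiv ℝ (fun y => fderiv ℝ u y v) x v := by
  have hud := hu.differentiable two_ne_zero
  have hψd := hψ.differentiable two_ne_zero
  have hDu : Differentiable ℝ (fun y => fderiv ℝ u y v) :=
    ((hu.fderiv_right le_rfl).clm_apply contDiff_const).differentiable one_ne_zero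
  have hDψ : Differentiable ℝ (fun y => fderiv ℝ ψ y v) :=
    ((hψ.fderiv_right le_rfl).clm_apply contDiff_const).differentiable one_ne_zero
  have hnear : (fun y => u y ^ 2 * fderiv ℝ (fun z => ψ z / u z) y v)
      =ᶠ[nhds x] fun y => u y * fderiv ℝ ψ y v - ψ y * fderiv ℝ u y v := by
    filter_upwards [hu.continuous.continuousAt.eventually_ne hx] with y hy
    exact sq_mul_fderiv_div_apply (hud y) (hψd y) hy v
  rw [hnear.fderiv_eq, fderiv_fun_sub ((hud x).fun_mul (hDψ x)) ((hψd x).fun_mul (hDu x)),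
    fderiv_fun_mul (hud x) (hDψ x), fderiv_fun_mul (hψd x) (hDu x)]
  simp only [sub_apply, add_apply, smul_apply, smul_eq_mul]
  ring

end Conjugation

lemma sum_fderiv_sq_mul_fderiv_div_eq {n : ℕ} {u ψ : EuclideanSpace ℝ (Fin n) → ℝ}
    (hu : ContDiff ℝ 2 u) (hψ : ContDiff ℝ 2 ψ) {x : EuclideanSpace ℝ (Fin n)} (hx : u x ≠ 0) :
    ∑ i, fderiv ℝ (fun y => u y ^ 2 * fderiv ℝ (fun z => ψ z / u z) y (eVec n i)) x (eVec n i)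
      = u x * lap ψ x - ψ x * lap u x := by
  simp only [lap, fderiv_sq_mul_fderiv_div_apply hu hψ hx, Finset.sum_sub_distrib,
    Finset.mul_sum]

theorem conjugated_eigenproblem_general (n : ℕ)
    (V u ψ : EuclideanSpace ℝ (Fin n) → ℝ) (lam : ℝ)
    (hu2 : ContDiff ℝ 2 u) (hupos : ∀ x, 0 < u x)
    (hu : ∀ x, -lap u x + V x * u x = 1)
    (hψ2 : ContDiff ℝ 2 ψ) :
    (∀ x, -lap ψ x + V x * ψ x = lam * ψ x) ↔
    (∀ x, (-(1/(u x)^2) *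
        ∑ i, fderiv ℝ (fun y => (u y)^2 * fderiv ℝ (fun z => ψ z / u z) y (eVec n i))
          x (eVec n i))
      + (1 / u x) * (ψ x / u x) = lam * (ψ x / u x)) := by
  have hconj : ∀ x, -(1 / u x ^ 2) *
      ∑ i, fderiv ℝ (fun y => u y ^ 2 * fderiv ℝ (fun z => ψ z / u z) y (eVec n i)) x (eVec n i)
        + 1 / u x * (ψ x / u x) = (-lap ψ x + V x * ψ x) / u x := fun x => by
    have hx := (hupos x).ne'
    rw [sum_fderiv_sq_mul_fderiv_div_eq hu2 hψ2 hx]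
    field_simp
    linear_combination -ψ x * hu x
  refine forall_congr' fun x => ?_
  rw [hconj, ← mul_div_assoc, div_left_inj' (hupos x).ne']

/-- `ψ` is an eigenfunction of `-Δ + V` with eigenvalue `λ`
iff `φ = ψ/u` satisfies `Lφ + Wφ = λφ`, where `W = 1/u` and
`Lφ = -(1/u²) div(u² ∇φ)`. -/
theorem conjugated_eigenproblem (n : ℕ)
    (V u ψ : EuclideanSpace ℝ (Fin n) → ℝ) (lam : ℝ)
    (hVmeas : Measurable V) (hVbdd : ∃ M, ∀ x, |V x| ≤ M)
    (hVnonneg : ∀ x, 0 ≤ V x) (hVper : per V)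
    (hVpos : 0 < volume {x | x ∈ Qd n ∧ 0 < V x})
    (hu2 : ContDiff ℝ 2 u) (huper : per u) (hupos : ∀ x, 0 < u x)
    (hu : ∀ x, -lap u x + V x * u x = 1)
    (hψ2 : ContDiff ℝ 2 ψ) :
    (∀ x, -lap ψ x + V x * ψ x = lam * ψ x) ↔
    (∀ x, (-(1/(u x)^2) *
        ∑ i, fderiv ℝ (fun y => (u y)^2 * fderiv ℝ (fun z => ψ z / u z) y (eVec n i))
          x (eVec n i))
      + (1 / u x) * (ψ x / u x) = lam * (ψ x / u x)) :=
  conjugated_eigenproblem_general n V u ψ lam hu2 hupos hu hψ2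
end
end

section
/- Every eigenvalue λ of H = -Δ + V on the torus satisfies λ ≥ inf W, where W = 1/u is the effective potential. More precisely, if ψ is a normalized eigenfunction then λ = ∫ u^2 |∇(ψ/u)|^2 + ∫ W ψ^2 ≥ inf W. -/
open MeasureTheory

noncomputable section

/-!
Write `ψ = u φ`. The product rule gives
`div (u² φ ∇φ) = u² |∇φ|² + u φ (Δψ - φ Δu)`, and the equations `-Δu + V u = 1`,
`-Δψ + V ψ = λ ψ` turn `Δψ - φ Δu` into `φ - λ ψ`, so the divergence equals
`u² |∇φ|² + W ψ² - λ ψ²`. The divergence of a periodic field integrates to zero over a period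
cell, whence `λ = ∫ u² |∇φ|² + ∫ W ψ²`; the first integral is nonnegative and the second is at
least `inf W · ∫ ψ² = inf W`.
-/

section Calculus

variable {𝕜 E : Type*} [NontriviallyNormedField 𝕜] [NormedAddCommGroup E] [NormedSpace 𝕜 E]
  {f g : E → 𝕜} {x : E}

theorem fderiv_fun_mul_apply (hf : DifferentiableAt 𝕜 f x) (hg : DifferentiableAt 𝕜 g x)
    (v : E) : fderiv 𝕜 (fun y => f y * g y) x v = f x * fderiv 𝕜 g x v + g x * fderiv 𝕜 f x v := by
  simp [fderiv_fun_mul hf hg]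

theorem fderiv_fun_sq_apply (hf : DifferentiableAt 𝕜 f x) (v : E) :
    fderiv 𝕜 (fun y => f y ^ 2) x v = 2 * f x * fderiv 𝕜 f x v := by
  simp [fderiv_fun_pow 2 hf]

theorem ContDiff.fderiv_apply_const (hf : ContDiff 𝕜 2 f) (v : E) :
    ContDiff 𝕜 1 fun x => fderiv 𝕜 f x v :=
  (hf.fderiv_right (by norm_num)).clm_apply contDiff_const

theorem fderiv_fderiv_fun_mul_apply (hf : ContDiff 𝕜 2 f) (hg : ContDiff 𝕜 2 g) (x v : E) :
    fderiv 𝕜 (fun y => fderiv 𝕜 (fun z => f z * g z) y v) x v =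
      f x * fderiv 𝕜 (fun y => fderiv 𝕜 g y v) x v
        + 2 * (fderiv 𝕜 f x v * fderiv 𝕜 g x v)
        + g x * fderiv 𝕜 (fun y => fderiv 𝕜 f y v) x v := by
  have hf1 := hf.differentiable two_ne_zero
  have hg1 := hg.differentiable two_ne_zero
  have hf2 := (hf.fderiv_apply_const v).differentiable one_ne_zero
  have hg2 := (hg.fderiv_apply_const v).differentiable one_ne_zero
  simp only [fderiv_fun_mul_apply (hf1 _) (hg1 _)]
  rw [fderiv_fun_add ((hf1 x).fun_mul (hg2 x)) ((hg1 x).fun_mul (hf2 x)), add_apply,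
    fderiv_fun_mul_apply (hf1 x) (hg2 x), fderiv_fun_mul_apply (hg1 x) (hf2 x)]
  ring

end Calculus

theorem integral_Icc_sum_fderiv_eq_zero_of_periodic {m : ℕ}
    (G : Fin (m + 1) → (Fin (m + 1) → ℝ) → ℝ) (hG : ∀ i, ContDiff ℝ 1 (G i))
    (hGper : ∀ i x, G i (x + Pi.single i 1) = G i x) :
    ∫ x in Set.Icc (0 : Fin (m + 1) → ℝ) 1, ∑ i, fderiv ℝ (G i) x (Pi.single i 1) = 0 := by
  have hGd : ∀ i, Differentiable ℝ (G i) := fun i => (hG i).differentiable one_ne_zero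
  have hcont : Continuous fun x => ∑ i, fderiv ℝ (G i) x (Pi.single i 1) :=
    continuous_finsetSum _ fun i _ =>
      ((hG i).continuous_fderiv one_ne_zero).clm_apply continuous_const
  rw [integral_divergence_of_hasFDerivAt_off_countable' 0 1 zero_le_one G
    (fun i x => fderiv ℝ (G i) x) ∅ Set.countable_empty (fun i => (hG i).continuous.continuousOn)
    (fun x _ i => (hGd i x).hasFDerivAt) (hcont.continuousOn.integrableOn_compact isCompact_Icc)]
  refine Finset.sum_eq_zero fun i _ => sub_eq_zero.2 (integral_congr_ae (.of_forall fun x => ?_))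
  have hx : (Fin.insertNth i ((1 : Fin (m + 1) → ℝ) i) x : Fin (m + 1) → ℝ)
      = Fin.insertNth i ((0 : Fin (m + 1) → ℝ) i) x + Pi.single i 1 := by
    ext j
    rcases eq_or_ne j i with rfl | h
    · simp
    · obtain ⟨k, rfl⟩ := Fin.exists_succAbove_eq h
      simp
  simp only [hx, hGper]

section Euclidean

variable {n : ℕ} {f g : EuclideanSpace ℝ (Fin n) → ℝ}

theorem lap_mul (hf : ContDiff ℝ 2 f) (hg : ContDiff ℝ 2 g) (x : EuclideanSpace ℝ (Fin n)) :
    lap (fun z => f z * g z) x =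
      f x * lap g x + 2 * ∑ i, fderiv ℝ f x (eVec n i) * fderiv ℝ g x (eVec n i)
        + g x * lap f x := by
  simp only [lap, fderiv_fderiv_fun_mul_apply hf hg, Finset.sum_add_distrib, Finset.mul_sum]

theorem per_fderiv_apply (hf : per f) (v : EuclideanSpace ℝ (Fin n)) :
    per fun x => fderiv ℝ f x v := by
  intro x i
  dsimp only
  rw [← fderiv_comp_add_right, show (fun y => f (y + eVec n i)) = f from funext (hf · i)]

theorem setIntegral_Qd :
    ∫ x in Qd n, f x = ∫ y in Set.Icc (0 : Fin n → ℝ) 1, f (WithLp.toLp 2 y) := by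
  have hQ : WithLp.toLp 2 ⁻¹' Qd n = Set.univ.pi fun _ => Set.Ico (0 : ℝ) 1 := by
    ext; simp [Qd]
  rw [← (PiLp.volume_preserving_toLp (Fin n)).setIntegral_preimage_emb
    (MeasurableEquiv.toLp 2 _).measurableEmbedding, hQ]
  exact setIntegral_congr_set Measure.univ_pi_Ico_ae_eq_Icc

theorem Continuous.integrableOn_Qd (hf : Continuous f) : IntegrableOn f (Qd n) := by
  have hK : IsCompact (WithLp.ofLp ⁻¹' Set.Icc (0 : Fin n → ℝ) 1) :=
    (EuclideanSpace.equiv (Fin n) ℝ).toHomeomorph.isCompact_preimage.2 isCompact_Icc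
  exact (hf.continuousOn.integrableOn_compact hK).mono_set fun x hx =>
    ⟨fun i => (hx i).1, fun i => (hx i).2.le⟩

theorem fderiv_comp_toLp_apply_single {F : EuclideanSpace ℝ (Fin n) → ℝ} (hF : Differentiable ℝ F)
    (y : Fin n → ℝ) (i : Fin n) :
    fderiv ℝ (fun z => F (WithLp.toLp 2 z)) y (Pi.single i 1)
      = fderiv ℝ F (WithLp.toLp 2 y) (eVec n i) := by
  have hL := (EuclideanSpace.equiv (Fin n) ℝ).symm.hasFDerivAt (x := y)
  rw [show (fun z => F (WithLp.toLp 2 z)) = F ∘ (EuclideanSpace.equiv (Fin n) ℝ).symm from rfl,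
    ((hF _).hasFDerivAt.comp y hL).fderiv]
  rfl

theorem integral_Qd_sum_fderiv_eq_zero_of_periodic (F : Fin n → EuclideanSpace ℝ (Fin n) → ℝ)
    (hF : ∀ i, ContDiff ℝ 1 (F i)) (hFper : ∀ i x, F i (x + eVec n i) = F i x) :
    ∫ x in Qd n, ∑ i, fderiv ℝ (F i) x (eVec n i) = 0 := by
  cases n with
  | zero => simp
  | succ m =>
    rw [setIntegral_Qd]
    simp only [← fderiv_comp_toLp_apply_single ((hF _).differentiable one_ne_zero)]
    refine integral_Icc_sum_fderiv_eq_zero_of_periodic _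
      (fun i => (hF i).comp (EuclideanSpace.equiv (Fin (m + 1)) ℝ).symm.contDiff) fun i x => ?_
    exact hFper i (WithLp.toLp 2 x)

theorem sum_fderiv_sq_mul_mul_fderiv {u φ : EuclideanSpace ℝ (Fin n) → ℝ} (hu : ContDiff ℝ 2 u)
    (hφ : ContDiff ℝ 2 φ) (x : EuclideanSpace ℝ (Fin n)) :
    ∑ i, fderiv ℝ (fun y => u y ^ 2 * φ y * fderiv ℝ φ y (eVec n i)) x (eVec n i)
      = u x ^ 2 * ∑ i, fderiv ℝ φ x (eVec n i) ^ 2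
        + u x * φ x * (lap (fun y => u y * φ y) x - φ x * lap u x) := by
  have hu1 := hu.differentiable two_ne_zero x
  have hφ1 := hφ.differentiable two_ne_zero x
  have hφ2 := fun v => (hφ.fderiv_apply_const v).differentiable one_ne_zero x
  rw [lap_mul hu hφ, add_sub_cancel_right]
  simp only [lap, Finset.mul_sum, ← Finset.sum_add_distrib]
  refine Finset.sum_congr rfl fun i _ => ?_
  rw [fderiv_fun_mul_apply ((hu1.fun_pow 2).fun_mul hφ1) (hφ2 _),
    fderiv_fun_mul_apply (hu1.fun_pow 2) hφ1, fderiv_fun_sq_apply hu1]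
  ring

end Euclidean

theorem eigenvalue_eq_energy {n : ℕ} {V u ψ : EuclideanSpace ℝ (Fin n) → ℝ} {lam : ℝ}
    (hu2 : ContDiff ℝ 2 u) (huper : per u) (hupos : ∀ x, 0 < u x)
    (hu : ∀ x, -lap u x + V x * u x = 1)
    (hψ2 : ContDiff ℝ 2 ψ) (hψper : per ψ)
    (hψ : ∀ x, -lap ψ x + V x * ψ x = lam * ψ x)
    (hnorm : (∫ x in Qd n, (ψ x)^2) = 1) :
    lam = (∫ x in Qd n,
            (u x)^2 * ∑ i, (fderiv ℝ (fun z => ψ z / u z) x (eVec n i))^2)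
          + (∫ x in Qd n, (1 / u x) * (ψ x)^2) := by
  set φ := fun z => ψ z / u z with hφ
  have hune x : u x ≠ 0 := (hupos x).ne'
  have hψφ : ψ = fun z => u z * φ z := funext fun z => (mul_div_cancel₀ _ (hune z)).symm
  have hφ2 : ContDiff ℝ 2 φ := hψ2.div hu2 hune
  have hφper : per φ := fun x i => by simp only [hφ, hψper x i, huper x i]
  have hdiv x : ∑ i, fderiv ℝ (fun y => u y ^ 2 * φ y * fderiv ℝ φ y (eVec n i)) x (eVec n i)
      = u x ^ 2 * ∑ i, fderiv ℝ φ x (eVec n i) ^ 2 + 1 / u x * ψ x ^ 2 - lam * ψ x ^ 2 := by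
    rw [sum_fderiv_sq_mul_mul_fderiv hu2 hφ2, ← hψφ, hφ]
    have := hune x
    field_simp
    linear_combination (-(ψ x * u x)) * hψ x + ψ x ^ 2 * hu x
  have h0 := integral_Qd_sum_fderiv_eq_zero_of_periodic
    (fun i y => u y ^ 2 * φ y * fderiv ℝ φ y (eVec n i))
    (fun i => ((hu2.pow 2).mul hφ2).of_le one_le_two |>.mul (hφ2.fderiv_apply_const _))
    (fun i x => by simp only [huper x i, hφper x i, per_fderiv_apply hφper _ x i])
  have hgrad : Continuous fun x => u x ^ 2 * ∑ i, fderiv ℝ φ x (eVec n i) ^ 2 :=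
    (hu2.continuous.pow 2).mul
      (continuous_finsetSum _ fun i _ => (hφ2.fderiv_apply_const _).continuous.pow 2)
  have hsq : Continuous fun x => ψ x ^ 2 := hψ2.continuous.pow 2
  have hpot : Continuous fun x => 1 / u x * ψ x ^ 2 :=
    (continuous_const.div hu2.continuous hune).mul hsq
  simp only [hdiv] at h0
  rw [integral_sub (hgrad.integrableOn_Qd.fun_add hpot.integrableOn_Qd)
      (hsq.integrableOn_Qd.const_mul lam),
    integral_add hgrad.integrableOn_Qd hpot.integrableOn_Qd, integral_const_mul, hnorm] at h0
  linarith

theorem eigenvalue_ge_inf_W_general (n : ℕ)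
    (V u ψ : EuclideanSpace ℝ (Fin n) → ℝ) (lam : ℝ)
    (hu2 : ContDiff ℝ 2 u) (huper : per u) (hupos : ∀ x, 0 < u x)
    (hu : ∀ x, -lap u x + V x * u x = 1)
    (hψ2 : ContDiff ℝ 2 ψ) (hψper : per ψ)
    (hψ : ∀ x, -lap ψ x + V x * ψ x = lam * ψ x)
    (hnorm : (∫ x in Qd n, (ψ x)^2) = 1) :
    lam = (∫ x in Qd n,
            (u x)^2 * ∑ i, (fderiv ℝ (fun z => ψ z / u z) x (eVec n i))^2)
          + (∫ x in Qd n, (1 / u x) * (ψ x)^2)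
      ∧ (⨅ x, 1 / u x) ≤ lam := by
  have hlam := eigenvalue_eq_energy hu2 huper hupos hu hψ2 hψper hψ hnorm
  refine ⟨hlam, ?_⟩
  have hbdd : BddBelow (Set.range fun x => 1 / u x) :=
    ⟨0, by rintro _ ⟨x, rfl⟩; exact (one_div_pos.2 (hupos x)).le⟩
  have hsq : Continuous fun x => ψ x ^ 2 := hψ2.continuous.pow 2
  have hpot : Continuous fun x => 1 / u x * ψ x ^ 2 :=
    (continuous_const.div hu2.continuous fun x => (hupos x).ne').mul hsq
  calc (⨅ x, 1 / u x) = ∫ x in Qd n, (⨅ x, 1 / u x) * ψ x ^ 2 := by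
        rw [integral_const_mul, hnorm, mul_one]
    _ ≤ ∫ x in Qd n, 1 / u x * ψ x ^ 2 :=
        integral_mono (hsq.integrableOn_Qd.const_mul _) hpot.integrableOn_Qd fun x =>
          mul_le_mul_of_nonneg_right (ciInf_le hbdd x) (sq_nonneg _)
    _ ≤ lam := by
        rw [hlam]
        exact le_add_of_nonneg_left (integral_nonneg fun x => by positivity)

/-- `λ ≥ inf W` with `W = 1/u`; more precisely, for a normalized
eigenfunction, `λ = ∫ u² |∇(ψ/u)|² + ∫ W ψ² ≥ inf W`. -/
theorem eigenvalue_ge_inf_W (n : ℕ)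
    (V u ψ : EuclideanSpace ℝ (Fin n) → ℝ) (lam : ℝ)
    (hVmeas : Measurable V) (hVbdd : ∃ M, ∀ x, |V x| ≤ M)
    (hVnonneg : ∀ x, 0 ≤ V x) (hVper : per V)
    (hVpos : 0 < volume {x | x ∈ Qd n ∧ 0 < V x})
    (hu2 : ContDiff ℝ 2 u) (huper : per u) (hupos : ∀ x, 0 < u x)
    (hu : ∀ x, -lap u x + V x * u x = 1)
    (hψ2 : ContDiff ℝ 2 ψ) (hψper : per ψ)
    (hψ : ∀ x, -lap ψ x + V x * ψ x = lam * ψ x)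
    (hnorm : (∫ x in Qd n, (ψ x)^2) = 1) :
    lam = (∫ x in Qd n,
            (u x)^2 * ∑ i, (fderiv ℝ (fun z => ψ z / u z) x (eVec n i))^2)
          + (∫ x in Qd n, (1 / u x) * (ψ x)^2)
      ∧ (⨅ x, 1 / u x) ≤ lam :=
  eigenvalue_ge_inf_W_general n V u ψ lam hu2 huper hupos hu hψ2 hψper hψ hnorm
end
end
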